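/- arXiv:0801.0499 — 3 statements merged into one kernel-verified Lean document; each statement's English description precedes it below -/
import Mathlib

section
/- Let θ ∼ N(0,1) be a 'fixed' effect and Y|θ ∼ N(θ,1), with selection S_Ω = {y : y ≥ 0}. The fixed-effect selection-adjusted posterior density π_S(θ|y) ∝ φ(θ)·φ(y−θ)/Φ(θ) is stochastically smaller than the unadjusted posterior N(y/2,1/2); equivalently, since Pr(Y ≥ 0|θ) = Φ(θ) is strictly increasing in θ, the likelihood ratio π_S(θ|y)/π(θ|y) ∝ 1/Φ(θ) is strictly decreasing in θ. -/
/-!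
Since `Φ` is the integral of the positive density `φ`, it is positive and strictly increasing,
so the likelihood ratio `π_S / π ∝ 1 / Φ` is strictly decreasing. A decreasing weight `w` moves
mass to the left: splitting at `t`, `w ≥ w t` on `(-∞, t]` and `w ≤ w t` on `(t, ∞)`, which after
normalisation is the cdf comparison. The only analytic point is that the adjusted posterior is
normalisable: for `θ ≤ 0`, `Φ θ ≥ φ (θ - 1) = exp (θ - 1/2) φ θ`, so `φ θ φ (y - θ) / Φ θ` is
bounded by a multiple of the Gaussian density `φ (y - 1 - θ)`.
-/

open MeasureTheory Real Set ProbabilityTheory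

theorem integral_pos_of_forall_pos {X : Type*} [MeasurableSpace X] {μ : Measure X} [NeZero μ]
    {f : X → ℝ} (hfi : Integrable f μ) (hpos : ∀ x, 0 < f x) : 0 < ∫ x, f x ∂μ := by
  rw [integral_pos_iff_support_of_nonneg (fun x => (hpos x).le) hfi,
    Function.support_eq_univ fun x => (hpos x).ne']
  exact Measure.measure_univ_pos.2 (NeZero.ne μ)

section StochasticOrder

variable {α : Type*} [LinearOrder α] [TopologicalSpace α] [OrderClosedTopology α]
  [MeasurableSpace α] [OpensMeasurableSpace α] {μ : Measure α}

theorem setIntegral_Iic_mul_integral_mul_le_of_antitone {g w : α → ℝ} (hg : 0 ≤ g)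
    (hw : Antitone w) (hgi : Integrable g μ) (hgwi : Integrable (fun x => g x * w x) μ) (t : α) :
    (∫ x in Iic t, g x ∂μ) * ∫ x, g x * w x ∂μ ≤
      (∫ x in Iic t, g x * w x ∂μ) * ∫ x, g x ∂μ := by
  have below : (∫ x in Iic t, g x ∂μ) * w t ≤ ∫ x in Iic t, g x * w x ∂μ := by
    rw [← integral_mul_const]
    exact setIntegral_mono_on (hgi.mul_const _).integrableOn hgwi.integrableOn measurableSet_Iic
      fun x hx => mul_le_mul_of_nonneg_left (hw hx) (hg x)
  have above : ∫ x in Ioi t, g x * w x ∂μ ≤ (∫ x in Ioi t, g x ∂μ) * w t := by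
    rw [← integral_mul_const]
    exact setIntegral_mono_on hgwi.integrableOn (hgi.mul_const _).integrableOn measurableSet_Ioi
      fun x hx => mul_le_mul_of_nonneg_left (hw (le_of_lt hx)) (hg x)
  have hIic : 0 ≤ ∫ x in Iic t, g x ∂μ := setIntegral_nonneg measurableSet_Iic fun x _ => hg x
  have hIoi : 0 ≤ ∫ x in Ioi t, g x ∂μ := setIntegral_nonneg measurableSet_Ioi fun x _ => hg x
  -- `A₁ B₂ ≤ w t A₁ A₂ ≤ B₁ A₂` in the notation `A = ∫ g`, `B = ∫ g w` split at `t`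
  rw [← integral_add_compl measurableSet_Iic hgi, ← integral_add_compl measurableSet_Iic hgwi,
    compl_Iic]
  nlinarith [mul_le_mul_of_nonneg_left above hIic, mul_le_mul_of_nonneg_left below hIoi]

end StochasticOrder

theorem strictMono_setIntegral_Iic_of_pos {f : ℝ → ℝ} (hfi : Integrable f)
    (hpos : ∀ x, 0 < f x) : StrictMono fun x => ∫ t in Iic x, f t := by
  intro a b hab
  rw [← sub_pos, intervalIntegral.integral_Iic_sub_Iic hfi.integrableOn hfi.integrableOn]
  exact intervalIntegral.intervalIntegral_pos_of_pos_on hfi.intervalIntegrable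
    (fun x _ => hpos x) hab

theorem setIntegral_Iic_pos_of_pos {f : ℝ → ℝ} (hfi : Integrable f) (hpos : ∀ x, 0 < f x)
    (x : ℝ) : 0 < ∫ t in Iic x, f t :=
  (setIntegral_nonneg measurableSet_Iic fun t _ => (hpos t).le).trans_lt
    (strictMono_setIntegral_Iic_of_pos hfi hpos (sub_one_lt x))

theorem strictAnti_div_div_div_div {g h : ℝ → ℝ} {a b : ℝ} (hg : ∀ x, g x ≠ 0)
    (hh : StrictMono h) (hpos : ∀ x, 0 < h x) (ha : 0 < a) (hb : 0 < b) :
    StrictAnti fun x => (g x / h x / a) / (g x / b) := by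
  have hratio : ∀ x, (g x / h x / a) / (g x / b) = b / a * (h x)⁻¹ := fun x => by
    field_simp [hg x, (hpos x).ne']
  intro x z hxz
  simp only [hratio]
  exact mul_lt_mul_of_pos_left ((inv_lt_inv₀ (hpos z) (hpos x)).2 (hh hxz)) (div_pos hb ha)

namespace ProbabilityTheory

theorem gaussianPDFReal_le (m : ℝ) (v : NNReal) (x : ℝ) :
    gaussianPDFReal m v x ≤ (√(2 * π * v))⁻¹ := by
  rw [gaussianPDFReal]
  refine mul_le_of_le_one_right (by positivity) (exp_le_one_iff.2 ?_)
  exact div_nonpos_of_nonpos_of_nonneg (neg_nonpos.2 (sq_nonneg _)) (by positivity)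

theorem monotoneOn_gaussianPDFReal (m : ℝ) (v : NNReal) :
    MonotoneOn (gaussianPDFReal m v) (Iic m) := by
  intro x hx z hz hxz
  simp only [gaussianPDFReal]
  gcongr _ * exp ?_
  exact div_le_div_of_nonneg_right (neg_le_neg (by nlinarith [mem_Iic.1 hx, mem_Iic.1 hz]))
    (by positivity)

theorem integrable_gaussianPDFReal_mul_comp_sub (m m' : ℝ) (v v' : NNReal) (y : ℝ) :
    Integrable fun θ => gaussianPDFReal m v θ * gaussianPDFReal m' v' (y - θ) :=
  (integrable_gaussianPDFReal m v).mul_bdd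
    ((measurable_gaussianPDFReal m' v').comp
      (measurable_const.sub measurable_id)).aestronglyMeasurable
    (ae_of_all _ fun θ => by
      rw [norm_of_nonneg (gaussianPDFReal_nonneg _ _ _)]
      exact gaussianPDFReal_le m' v' (y - θ))

theorem gaussianPDFReal_sub_one_le_setIntegral_Iic {m : ℝ} {v : NNReal} {x : ℝ} (hx : x ≤ m) :
    gaussianPDFReal m v (x - 1) ≤ ∫ t in Iic x, gaussianPDFReal m v t := by
  have hint := (integrable_gaussianPDFReal m v).integrableOn (s := Ioc (x - 1) x)
  calc gaussianPDFReal m v (x - 1)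
        = gaussianPDFReal m v (x - 1) * volume.real (Ioc (x - 1) x) := by simp
    _ ≤ ∫ t in Ioc (x - 1) x, gaussianPDFReal m v t :=
        setIntegral_ge_of_const_le_real measurableSet_Ioc (by simp) (fun t ht =>
          monotoneOn_gaussianPDFReal m v (mem_Iic.2 (by linarith)) (ht.2.trans hx) ht.1.le) hint
    _ ≤ ∫ t in Iic x, gaussianPDFReal m v t :=
        setIntegral_mono_set (integrable_gaussianPDFReal m v).integrableOn
          (ae_of_all _ fun t => gaussianPDFReal_nonneg m v t) Ioc_subset_Iic_self.eventuallyLE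

theorem gaussianPDFReal_zero_one_sub_one (s : ℝ) :
    gaussianPDFReal 0 1 (s - 1) = exp (s - 1 / 2) * gaussianPDFReal 0 1 s := by
  simp only [gaussianPDFReal, NNReal.coe_one, sub_zero, mul_one]
  rw [mul_left_comm, ← exp_add]
  ring_nf

theorem gaussianPDFReal_zero_one_mul_div_setIntegral_Iic_le {θ : ℝ} (hθ : θ ≤ 0) (y : ℝ) :
    gaussianPDFReal 0 1 θ * gaussianPDFReal 0 1 (y - θ) / ∫ t in Iic θ, gaussianPDFReal 0 1 t ≤
      exp (1 - y) * gaussianPDFReal 0 1 (y - 1 - θ) := by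
  have hpos := fun x => gaussianPDFReal_pos 0 1 x one_ne_zero
  calc _ ≤ gaussianPDFReal 0 1 θ * gaussianPDFReal 0 1 (y - θ) / gaussianPDFReal 0 1 (θ - 1) :=
        div_le_div_of_nonneg_left (mul_pos (hpos _) (hpos _)).le (hpos _)
          (gaussianPDFReal_sub_one_le_setIntegral_Iic hθ)
    _ = exp (1 - y) * gaussianPDFReal 0 1 (y - 1 - θ) := by
        rw [gaussianPDFReal_zero_one_sub_one θ, show y - 1 - θ = y - θ - 1 by ring,
          gaussianPDFReal_zero_one_sub_one (y - θ), mul_comm (exp _),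
          mul_div_mul_left _ _ (hpos θ).ne', ← mul_assoc, ← exp_add, div_eq_mul_inv, ← exp_neg,
          mul_comm]
        ring_nf

theorem integrable_gaussianPDFReal_zero_one_mul_div_setIntegral_Iic (y : ℝ) :
    Integrable fun θ => gaussianPDFReal 0 1 θ * gaussianPDFReal 0 1 (y - θ) /
      ∫ t in Iic θ, gaussianPDFReal 0 1 t := by
  have hpos := fun x => gaussianPDFReal_pos 0 1 x one_ne_zero
  have hΦ_mono := strictMono_setIntegral_Iic_of_pos (integrable_gaussianPDFReal 0 1) hpos
  have hΦ_pos := setIntegral_Iic_pos_of_pos (integrable_gaussianPDFReal 0 1) hpos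
  have hg := integrable_gaussianPDFReal_mul_comp_sub 0 0 1 1 y
  have hbound := (((integrable_gaussianPDFReal 0 1).comp_sub_left (y - 1)).const_mul
    (exp (1 - y))).add (hg.div_const (∫ t in Iic 0, gaussianPDFReal 0 1 t))
  refine hbound.mono' (hg.1.div₀ hΦ_mono.monotone.measurable.aestronglyMeasurable)
    (ae_of_all _ fun θ => ?_)
  rw [norm_of_nonneg (div_pos (mul_pos (hpos _) (hpos _)) (hΦ_pos θ)).le]
  rcases le_or_gt θ 0 with hθ | hθ
  · exact (gaussianPDFReal_zero_one_mul_div_setIntegral_Iic_le hθ y).trans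
      (le_add_of_nonneg_right (div_pos (mul_pos (hpos _) (hpos _)) (hΦ_pos 0)).le)
  · exact (div_le_div_of_nonneg_left (mul_pos (hpos _) (hpos _)).le (hΦ_pos 0)
      (hΦ_mono.monotone hθ.le)).trans
        (le_add_of_nonneg_left (mul_nonneg (exp_pos _).le (hpos _).le))

end ProbabilityTheory

/-- Fixed effect θ ~ N(0,1), Y|θ ~ N(θ,1), selection S_Ω = {y ≥ 0}. The fixed-effect
selection-adjusted posterior density `π_S(θ|y) ∝ φ(θ)φ(y−θ)/Φ(θ)` is stochastically
smaller than the unadjusted posterior (∝ φ(θ)φ(y−θ), i.e. N(y/2,1/2)); equivalently,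
since `Pr(Y ≥ 0|θ) = Φ(θ)` is strictly increasing, the ratio of the two posterior
densities is strictly decreasing in θ. -/
theorem fixed_effect_adjusted_posterior_stochastically_smaller
    (y : ℝ)
    (φ : ℝ → ℝ) (hφ : ∀ x, φ x = Real.exp (-(x ^ 2) / 2) / Real.sqrt (2 * π))
    (Φ : ℝ → ℝ) (hΦ : ∀ x, Φ x = ∫ t in Set.Iic x, φ t ∂volume)
    (C : ℝ) (hC : C = ∫ θ, φ θ * φ (y - θ) ∂volume)
    (CS : ℝ) (hCS : CS = ∫ θ, φ θ * φ (y - θ) / Φ θ ∂volume) :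
    StrictMono Φ ∧
    StrictAnti (fun θ : ℝ =>
      (φ θ * φ (y - θ) / Φ θ / CS) / (φ θ * φ (y - θ) / C)) ∧
    ∀ t : ℝ, ∫ θ in Set.Iic t, φ θ * φ (y - θ) / C ∂volume ≤
      ∫ θ in Set.Iic t, φ θ * φ (y - θ) / Φ θ / CS ∂volume := by
  obtain rfl : φ = gaussianPDFReal 0 1 := funext fun x => by simp [hφ, gaussianPDFReal]; ring
  obtain rfl : Φ = fun x => ∫ t in Iic x, gaussianPDFReal 0 1 t := funext hΦ
  have hpos := fun x => gaussianPDFReal_pos 0 1 x one_ne_zero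
  have hg_pos : ∀ θ, 0 < gaussianPDFReal 0 1 θ * gaussianPDFReal 0 1 (y - θ) :=
    fun θ => mul_pos (hpos θ) (hpos (y - θ))
  have hΦ_pos := setIntegral_Iic_pos_of_pos (integrable_gaussianPDFReal 0 1) hpos
  have hg := integrable_gaussianPDFReal_mul_comp_sub 0 0 1 1 y
  have hgΦ := integrable_gaussianPDFReal_zero_one_mul_div_setIntegral_Iic y
  have hC_pos : 0 < C := hC ▸ integral_pos_of_forall_pos hg hg_pos
  have hCS_pos : 0 < CS :=
    hCS ▸ integral_pos_of_forall_pos hgΦ fun θ => div_pos (hg_pos θ) (hΦ_pos θ)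
  have hΦ_mono := strictMono_setIntegral_Iic_of_pos (integrable_gaussianPDFReal 0 1) hpos
  refine ⟨hΦ_mono, strictAnti_div_div_div_div (fun θ => (hg_pos θ).ne') hΦ_mono hΦ_pos hCS_pos
    hC_pos, fun t => ?_⟩
  rw [integral_div, integral_div, div_le_div_iff₀ hC_pos hCS_pos, hC, hCS]
  simp only [div_eq_mul_inv] at hgΦ ⊢
  exact setIntegral_Iic_mul_integral_mul_le_of_antitone (fun θ => (hg_pos θ).le)
    (fun a b hab => inv_anti₀ (hΦ_pos a) (hΦ_mono.monotone hab)) hg hgΦ t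
end

section
/- (Corollary 2, Neyman–Pearson type) Let ρ̃(y) ∈ [0,1] and m̃(y) be a probability density on Ω. Among all measurable selection rules S ⊆ Ω with ∫_S m̃(y)dy > 0 and the same weighted average r(S) = ∫_S ρ̃(y)m̃(y)dy / ∫_S m̃(y)dy, the rule S* = {y : ρ̃(y) ≤ s} maximizes the selection probability ∫_S m̃(y)dy: i.e., if r(S) ≤ r(S*) then ∫_S m̃(y)dy ≤ ∫_{S*} m̃(y)dy, under the assumption that ρ̃ takes the value exactly s only on a m̃-null set or with appropriate tie-handling. -/
open MeasureTheory

/-!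
With the Lagrangian `f = (ρ - s) m̃`, which is `≤ 0` on `S*` and `≥ 0` off it, every rule `S`
satisfies `∫_{S*} f ≤ ∫_S f`, i.e. `R(S*) - s P(S*) ≤ R(S) - s P(S)` for the risk integrals `R`
and selection probabilities `P`. Since `m̃` puts no mass on the ties `{ρ = s}`, the positive mass
of `S*` sits on `{ρ < s}`, so `R(S*) - s P(S*) < 0`. Combined with `R(S)/P(S) ≤ R(S*)/P(S*)`
this forces `P(S) ≤ P(S*)`.
-/

section

variable {Ω : Type*} [MeasurableSpace Ω] {μ : Measure Ω}

theorem setIntegral_le_setIntegral_of_nonpos_of_nonneg_compl {f : Ω → ℝ} {T : Set Ω}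
    (hT : MeasurableSet T) (hf : Integrable f μ) (hf_T : ∀ y ∈ T, f y ≤ 0)
    (hf_compl : ∀ y ∉ T, 0 ≤ f y) (S : Set Ω) :
    ∫ y in T, f y ∂μ ≤ ∫ y in S, f y ∂μ := by
  have h_inter : ∫ y in T, f y ∂μ ≤ ∫ y in S ∩ T, f y ∂μ := by
    have h := setIntegral_mono_set (s := S ∩ T) hf.integrableOn.neg
      ((ae_restrict_iff' hT).2 (Filter.Eventually.of_forall fun y hy => neg_nonneg.2 (hf_T y hy)))
      Set.inter_subset_right.eventuallyLE
    simpa only [Pi.neg_apply, integral_neg, neg_le_neg_iff] using h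
  have h_diff : 0 ≤ ∫ y in S \ T, f y ∂μ :=
    setIntegral_nonneg_of_ae_restrict <| ae_restrict_of_ae_restrict_of_subset
      (fun y hy => hy.2) ((ae_restrict_iff' hT.compl).2 (Filter.Eventually.of_forall hf_compl))
  calc ∫ y in T, f y ∂μ ≤ ∫ y in S ∩ T, f y ∂μ + ∫ y in S \ T, f y ∂μ := by linarith
    _ = ∫ y in S, f y ∂μ := integral_inter_add_sdiff hT hf.integrableOn

theorem setIntegral_mul_pos_of_pos {h g : Ω → ℝ} {T : Set Ω} (hT : MeasurableSet T)
    (hh : ∀ y ∈ T, 0 < h y) (hg : ∀ y ∈ T, 0 ≤ g y) (hg_int : IntegrableOn g T μ)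
    (hhg_int : IntegrableOn (fun y => h y * g y) T μ) (hpos : 0 < ∫ y in T, g y ∂μ) :
    0 < ∫ y in T, h y * g y ∂μ := by
  have hg_ae : 0 ≤ᵐ[μ.restrict T] g :=
    (ae_restrict_iff' hT).2 (Filter.Eventually.of_forall hg)
  have hhg_ae : 0 ≤ᵐ[μ.restrict T] fun y => h y * g y :=
    (ae_restrict_iff' hT).2 (Filter.Eventually.of_forall fun y hy =>
      mul_nonneg (hh y hy).le (hg y hy))
  have h_support : Function.support (fun y => h y * g y) ∩ T = Function.support g ∩ T := by
    ext y
    simp only [Set.mem_inter_iff, Function.mem_support, mul_ne_zero_iff]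
    exact ⟨fun ⟨⟨_, hgy⟩, hy⟩ => ⟨hgy, hy⟩, fun ⟨hgy, hy⟩ => ⟨⟨(hh y hy).ne', hgy⟩, hy⟩⟩
  rw [setIntegral_pos_iff_support_of_nonneg_ae hg_ae hg_int] at hpos
  rwa [setIntegral_pos_iff_support_of_nonneg_ae hhg_ae hhg_int, h_support]

theorem integrable_sub_mul {ρ g : Ω → ℝ} (hg_int : Integrable g μ)
    (hρg_int : Integrable (fun y => ρ y * g y) μ) (s : ℝ) :
    Integrable (fun y => (ρ y - s) * g y) μ := by
  convert hρg_int.sub (hg_int.const_mul s) using 1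
  funext y
  exact sub_mul (ρ y) s (g y)

theorem setIntegral_le_eq_lt_add_eq {ρ F : Ω → ℝ} (hρ : Measurable ρ) (hF : Integrable F μ)
    (s : ℝ) :
    ∫ y in {y | ρ y ≤ s}, F y ∂μ = ∫ y in {y | ρ y < s}, F y ∂μ + ∫ y in {y | ρ y = s}, F y ∂μ := by
  have h_union : {y | ρ y ≤ s} = {y | ρ y < s} ∪ {y | ρ y = s} := by
    ext y
    simp only [Set.mem_ofPred_eq, Set.mem_union]
    exact le_iff_lt_or_eq
  rw [h_union]
  exact setIntegral_union (Set.disjoint_left.2 fun _ hlt heq => hlt.ne heq)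
    (hρ (measurableSet_singleton s)) hF.integrableOn hF.integrableOn

theorem setIntegral_sub_mul_neg_of_null_ties {ρ g : Ω → ℝ} (hρ : Measurable ρ)
    (hg : ∀ y, 0 ≤ g y) (hg_int : Integrable g μ) (hρg_int : Integrable (fun y => ρ y * g y) μ)
    {s : ℝ} (hties : ∫ y in {y | ρ y = s}, g y ∂μ = 0)
    (hpos : 0 < ∫ y in {y | ρ y ≤ s}, g y ∂μ) :
    ∫ y in {y | ρ y ≤ s}, (ρ y - s) * g y ∂μ < 0 := by
  have hf_int := integrable_sub_mul hg_int hρg_int s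
  have h_ties_zero : ∫ y in {y | ρ y = s}, (ρ y - s) * g y ∂μ = 0 :=
    setIntegral_eq_zero_of_forall_eq_zero fun y hy => by simp [show ρ y = s from hy]
  have h_lt_pos : 0 < ∫ y in {y | ρ y < s}, g y ∂μ := by
    rwa [setIntegral_le_eq_lt_add_eq hρ hg_int, hties, add_zero] at hpos
  have h_strict : 0 < ∫ y in {y | ρ y < s}, (s - ρ y) * g y ∂μ := by
    refine setIntegral_mul_pos_of_pos (measurableSet_lt hρ measurable_const)
      (fun y hy => sub_pos.2 hy) (fun y _ => hg y) hg_int.integrableOn ?_ h_lt_pos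
    convert hf_int.integrableOn.neg using 1
    funext y
    simp only [Pi.neg_apply]
    ring
  have h_flip : ∫ y in {y | ρ y < s}, (ρ y - s) * g y ∂μ =
      -∫ y in {y | ρ y < s}, (s - ρ y) * g y ∂μ := by
    rw [← integral_neg]
    congr 1 with y
    ring
  rw [setIntegral_le_eq_lt_add_eq hρ hf_int, h_ties_zero, add_zero, h_flip]
  exact neg_neg_of_pos h_strict

theorem setIntegral_sub_mul_eq {ρ g : Ω → ℝ} (hg_int : Integrable g μ)
    (hρg_int : Integrable (fun y => ρ y * g y) μ) (s : ℝ) (T : Set Ω) :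
    ∫ y in T, (ρ y - s) * g y ∂μ = ∫ y in T, ρ y * g y ∂μ - s * ∫ y in T, g y ∂μ := by
  simp only [sub_mul]
  rw [integral_sub hρg_int.integrableOn (hg_int.const_mul s).integrableOn, integral_const_mul]

end

theorem le_of_div_le_div_of_sub_mul_le {R P R' P' s : ℝ} (hP : 0 < P) (hP' : 0 < P')
    (h_ratio : R / P ≤ R' / P') (h_lagrange : R' - s * P' ≤ R - s * P) (h_neg : R' - s * P' < 0) :
    P ≤ P' := by
  rw [div_le_div_iff₀ hP hP'] at h_ratio
  nlinarith

theorem threshold_rule_maximizes_selection_probability_general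
    {Ω : Type*} [MeasurableSpace Ω] (μ : Measure Ω)
    (ρ : Ω → ℝ) (hρ_meas : Measurable ρ)
    (mt : Ω → ℝ) (hmt_nonneg : ∀ y, 0 ≤ mt y)
    (hmt_int : Integrable mt μ) (hρmt_int : Integrable (fun y => ρ y * mt y) μ)
    (s : ℝ)
    (hties : ∫ y in {y | ρ y = s}, mt y ∂μ = 0)
    (hSstar_pos : 0 < ∫ y in {y | ρ y ≤ s}, mt y ∂μ)
    (S : Set Ω)
    (hS_pos : 0 < ∫ y in S, mt y ∂μ)
    (hrisk : (∫ y in S, ρ y * mt y ∂μ) / (∫ y in S, mt y ∂μ) ≤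
      (∫ y in {y | ρ y ≤ s}, ρ y * mt y ∂μ) / (∫ y in {y | ρ y ≤ s}, mt y ∂μ)) :
    ∫ y in S, mt y ∂μ ≤ ∫ y in {y | ρ y ≤ s}, mt y ∂μ := by
  have h_lagrange := setIntegral_le_setIntegral_of_nonpos_of_nonneg_compl
    (measurableSet_le hρ_meas measurable_const) (integrable_sub_mul hmt_int hρmt_int s)
    (fun y hy => mul_nonpos_of_nonpos_of_nonneg (sub_nonpos.2 hy) (hmt_nonneg y))
    (fun y hy => mul_nonneg (sub_nonneg.2 (le_of_not_ge hy)) (hmt_nonneg y)) S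
  have h_neg := setIntegral_sub_mul_neg_of_null_ties hρ_meas hmt_nonneg hmt_int hρmt_int
    hties hSstar_pos
  simp only [setIntegral_sub_mul_eq hmt_int hρmt_int] at h_lagrange h_neg
  exact le_of_div_le_div_of_sub_mul_le hS_pos hSstar_pos hrisk h_lagrange h_neg

/-- Corollary 2 (Neyman–Pearson type): among measurable selection rules S with
positive selection probability under the marginal density m̃, the threshold rule
S* = {y : ρ̃(y) ≤ s} maximizes the selection probability among rules whose
saBayes risk r(S) = ∫_S ρ̃ m̃ / ∫_S m̃ is at most r(S*), assuming ties
{ρ̃ = s} are m̃-null. -/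
theorem threshold_rule_maximizes_selection_probability
    {Ω : Type*} [MeasurableSpace Ω] (μ : Measure Ω)
    (ρ : Ω → ℝ) (hρ_meas : Measurable ρ) (hρ0 : ∀ y, 0 ≤ ρ y) (hρ1 : ∀ y, ρ y ≤ 1)
    (mt : Ω → ℝ) (hmt_nonneg : ∀ y, 0 ≤ mt y) (hmt_prob : ∫ y, mt y ∂μ = 1)
    (hmt_int : Integrable mt μ) (hρmt_int : Integrable (fun y => ρ y * mt y) μ)
    (s : ℝ) (hs0 : 0 ≤ s) (hs1 : s ≤ 1)
    (hties : ∫ y in {y | ρ y = s}, mt y ∂μ = 0)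
    (hSstar_pos : 0 < ∫ y in {y | ρ y ≤ s}, mt y ∂μ)
    (S : Set Ω) (hS : MeasurableSet S)
    (hS_pos : 0 < ∫ y in S, mt y ∂μ)
    (hrisk : (∫ y in S, ρ y * mt y ∂μ) / (∫ y in S, mt y ∂μ) ≤
      (∫ y in {y | ρ y ≤ s}, ρ y * mt y ∂μ) / (∫ y in {y | ρ y ≤ s}, mt y ∂μ)) :
    ∫ y in S, mt y ∂μ ≤ ∫ y in {y | ρ y ≤ s}, mt y ∂μ :=
  threshold_rule_maximizes_selection_probability_general μ ρ hρ_meas mt hmt_nonneg hmt_int hρmt_int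
    s hties hSstar_pos S hS_pos hrisk
end

section
/- In the two-group mixture model, the pFDR equals the conditional expectation of the local FDR over the rejection region: Pr(H = 0 | Y ∈ Γ) = E[fdr(Y) | Y ∈ Γ], where fdr(y) = π₀f₀(y)/(π₀f₀(y) + (1−π₀)f₁(y)) is the conditional probability that H = 0 given Y = y. -/
open MeasureTheory

theorem setIntegral_div_mul_cancel_of_ne_zero {Ω : Type*} [MeasurableSpace Ω] {μ : Measure Ω}
    {s : Set Ω} {g m : Ω → ℝ} (hm : ∀ y, m y ≠ 0) :
    ∫ y in s, g y / m y * m y ∂μ = ∫ y in s, g y ∂μ :=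
  integral_congr_ae (Filter.Eventually.of_forall fun y => div_mul_cancel₀ (g y) (hm y))

theorem pFDR_eq_conditional_expectation_of_local_fdr_general
    {Ω : Type*} [MeasurableSpace Ω] (μ : Measure Ω)
    (π₀ : ℝ)
    (f₀ : Ω → ℝ)
    (mY : Ω → ℝ)
    (hmY_pos : ∀ y, 0 < mY y)
    (fdr : Ω → ℝ) (hfdr : ∀ y, fdr y = π₀ * f₀ y / mY y)
    (Γ : Set Ω) :
    π₀ * (∫ y in Γ, f₀ y ∂μ) / (∫ y in Γ, mY y ∂μ) =
      (∫ y in Γ, fdr y * mY y ∂μ) / (∫ y in Γ, mY y ∂μ) := by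
  rw [funext hfdr, setIntegral_div_mul_cancel_of_ne_zero fun y => (hmY_pos y).ne',
    integral_const_mul]

/-- In the two-group mixture model, the pFDR equals the conditional expectation of the
local FDR over the rejection region:
Pr(H = 0 | Y ∈ Γ) = E[fdr(Y) | Y ∈ Γ], where fdr(y) = π₀f₀(y)/m(y) and
m(y) = π₀f₀(y) + (1−π₀)f₁(y) is the marginal density of Y. -/
theorem pFDR_eq_conditional_expectation_of_local_fdr
    {Ω : Type*} [MeasurableSpace Ω] (μ : Measure Ω)
    (π₀ : ℝ) (hπ₀ : 0 < π₀) (hπ₀' : π₀ < 1)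
    (f₀ f₁ : Ω → ℝ)
    (hf₀_nonneg : ∀ y, 0 ≤ f₀ y) (hf₀_prob : ∫ y, f₀ y ∂μ = 1)
    (hf₁_nonneg : ∀ y, 0 ≤ f₁ y) (hf₁_prob : ∫ y, f₁ y ∂μ = 1)
    (mY : Ω → ℝ) (hmY : ∀ y, mY y = π₀ * f₀ y + (1 - π₀) * f₁ y)
    (hmY_pos : ∀ y, 0 < mY y)
    (fdr : Ω → ℝ) (hfdr : ∀ y, fdr y = π₀ * f₀ y / mY y)
    (Γ : Set Ω) (hΓ : MeasurableSet Γ)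
    (hpos : 0 < ∫ y in Γ, mY y ∂μ) :
    π₀ * (∫ y in Γ, f₀ y ∂μ) / (∫ y in Γ, mY y ∂μ) =
      (∫ y in Γ, fdr y * mY y ∂μ) / (∫ y in Γ, mY y ∂μ) :=
  pFDR_eq_conditional_expectation_of_local_fdr_general μ π₀ f₀ mY hmY_pos fdr hfdr Γ
end
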